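/- arXiv:2306.08504 — 2 statements merged into one kernel-verified Lean document; each statement's English description precedes it below -/
import Mathlib

section
/- Let P be a finite nonempty set of points in the Euclidean plane ℝ² and let s ∈ ℝ² \ P be such that all pairwise Euclidean distances among points of P ∪ {s} are pairwise distinct (so that minimum spanning trees are unique). Let T be the minimum spanning tree of P, let T' be the minimum spanning tree of P ∪ {s}, let N be the set of neighbours of s in T', and let B_N = { e_{xy} : x, y ∈ N, x ≠ y } be the set of bottleneck edges of pairs of N in T. Then the total length of T' equals the total length of T, plus the sum of dist(s, x) over x ∈ N, minus the sum of the lengths of the edges in B_N. -/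
open scoped BigOperators

noncomputable section

/-- The Euclidean plane. -/
abbrev Pt : Type := EuclideanSpace ℝ (Fin 2)

/-- The length of an edge (an unordered pair of points): the Euclidean
distance between its endpoints. -/
def edgeLen : Sym2 Pt → ℝ :=
  Sym2.lift ⟨fun a b => dist a b, fun a b => dist_comm a b⟩

/-- The total length of a graph on the plane: the sum of the Euclidean
lengths of its edges. -/
def glength (G : SimpleGraph Pt) : ℝ := ∑ᶠ e ∈ G.edgeSet, edgeLen e

/-- `G` is a spanning tree of the point set `V`: all its edges join points of
`V`, it is acyclic, and all points of `V` are pairwise connected in `G`. -/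
def IsSpanningTreeOn (V : Set Pt) (G : SimpleGraph Pt) : Prop :=
  (∀ ⦃x y : Pt⦄, G.Adj x y → x ∈ V ∧ y ∈ V) ∧ G.IsAcyclic ∧
    ∀ x ∈ V, ∀ y ∈ V, G.Reachable x y

/-- `G` is a minimum spanning tree of the point set `V`. -/
def IsMSTOn (V : Set Pt) (G : SimpleGraph Pt) : Prop :=
  IsSpanningTreeOn V G ∧
    ∀ H : SimpleGraph Pt, IsSpanningTreeOn V H → glength G ≤ glength H

/-- The edges of `T` have pairwise distinct lengths. -/
def DistinctEdgeLengths (T : SimpleGraph Pt) : Prop :=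
  ∀ e ∈ T.edgeSet, ∀ f ∈ T.edgeSet, edgeLen e = edgeLen f → e = f

/-- `e` is the (unique) edge of maximum length on the (unique) path in `T`
from `x` to `y`: it is an edge of `T` lying on every path from `x` to `y`,
and on every such path its length is maximal. -/
def BottleneckEdge (T : SimpleGraph Pt) (x y : Pt) (e : Sym2 Pt) : Prop :=
  e ∈ T.edgeSet ∧
    ∀ p : T.Walk x y, p.IsPath → e ∈ p.edges ∧ ∀ f ∈ p.edges, edgeLen f ≤ edgeLen e


/-! Every edge of `T'` avoiding `s` is an edge of `T`: by the cut property in `T'`, the cycle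
property in `T` and the distinctness of distances, it coincides with an edge of the `T`-path
between its ends. So `T'` is the star of `s` together with `T ∩ T'`, and it remains to see that
`T \ T'` is the set of bottleneck edges. If the bottleneck edge `e` of two neighbours `x, y` of
`s` were in `T'`, then `x` and `y` would stay connected through `s` in `T' - e`, so another edge
of the `T`-path from `x` to `y` would cross the cut of `e` in `T'` and, by the cut property, be
at least as long as `e`. Conversely, the `T'`-path between the ends of an edge of `T \ T'` must
pass through `s`, and the edge is the bottleneck for the two neighbours of `s` on that path. -/

namespace SimpleGraph

variable {V : Type*} {G K : SimpleGraph V} {u v x y : V} {e : Sym2 V}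

theorem Walk.reachable_of_forall_mem_edges (p : G.Walk x y)
    (h : ∀ c d, s(c, d) ∈ p.edges → K.Reachable c d) : K.Reachable x y := by
  induction p with
  | nil => rfl
  | cons _ p ih => exact (h _ _ (by simp)).trans (ih fun c d hcd => h c d (by simp [hcd]))

theorem Walk.reachable_ends_of_mem_edges (p : G.Walk x y) (hp : p.edges.Nodup)
    (he : s(u, v) ∈ p.edges)
    (h : ∀ c d, s(c, d) ∈ p.edges → s(c, d) ≠ s(u, v) → K.Reachable c d) :
    (K.Reachable x u ∧ K.Reachable v y) ∨ (K.Reachable x v ∧ K.Reachable u y) := by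
  induction p with
  | nil => simp at he
  | @cons a b c hab p ih =>
    rw [edges_cons, List.nodup_cons] at hp
    simp only [edges_cons, List.mem_cons] at he h
    rcases he with he | he
    · have hbc : K.Reachable b c := p.reachable_of_forall_mem_edges fun c d hcd =>
        h c d (.inr hcd) fun hcd' => hp.1 (he ▸ hcd' ▸ hcd)
      rcases Sym2.eq_iff.mp he with ⟨rfl, rfl⟩ | ⟨rfl, rfl⟩
      exacts [.inl ⟨.rfl, hbc⟩, .inr ⟨.rfl, hbc⟩]
    · have hab : K.Reachable a b := h a b (.inl rfl) fun hab => hp.1 (hab ▸ he)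
      refine (ih hp.2 he fun c d hcd => h c d (.inr hcd)).imp ?_ ?_ <;>
        exact fun h => ⟨hab.trans h.1, h.2⟩

theorem Adj.reachable_deleteEdges (h : G.Adj u v) (he : s(u, v) ≠ e) :
    (G.deleteEdges {e}).Reachable u v :=
  (deleteEdges_adj.mpr ⟨h, he⟩).reachable

theorem Walk.reachable_deleteEdges_of_notMem (p : G.Walk x y) (he : e ∉ p.edges) :
    (G.deleteEdges {e}).Reachable x y :=
  p.reachable_of_forall_mem_edges fun _ _ h =>
    (p.adj_of_mem_edges h).reachable_deleteEdges fun h' => he (h' ▸ h)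

theorem IsAcyclic.not_reachable_deleteEdges_of_mem_edges (hG : G.IsAcyclic) {p : G.Walk x y}
    (hp : p.IsPath) (he : e ∈ p.edges) : ¬ (G.deleteEdges {e}).Reachable x y := by
  classical
  rintro ⟨q⟩
  let q' : G.Path x y := ⟨_, (q.mapLe (deleteEdges_le {e})).bypass_isPath⟩
  have hq' : q'.1 = p := congrArg Subtype.val <| (hG.subsingleton_path x y).elim q' ⟨p, hp⟩
  have := Walk.edges_bypass_subset_edges _ (hq' ▸ he)
  rw [Walk.edges_mapLe_eq_edges] at this
  simpa using q.edges_subset_edgeSet this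

theorem IsAcyclic.not_reachable_deleteEdges_of_adj (hG : G.IsAcyclic) (h : G.Adj u v) :
    ¬ (G.deleteEdges {s(u, v)}).Reachable u v :=
  isBridge_iff.mp (isAcyclic_iff_forall_adj_isBridge.mp hG h)

theorem Walk.IsPath.exists_adj_walk_notMem_support {p : G.Walk u v} (hp : p.IsPath)
    (huv : u ≠ v) :
    ∃ x, G.Adj u x ∧ ∃ r : G.Walk x v, u ∉ r.support ∧ r.edges ⊆ p.edges := by
  cases p with
  | nil => exact absurd rfl huv
  | cons h r => exact ⟨_, h, r, (cons_isPath_iff _ _).mp hp |>.2, by simp⟩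

theorem edgeSet_finite_of_adj {S : Set V} (hS : S.Finite)
    (h : ∀ ⦃x y⦄, G.Adj x y → x ∈ S ∧ y ∈ S) : G.edgeSet.Finite := by
  refine ((hS.prod hS).image (Function.uncurry Sym2.mk)).subset fun e he => ?_
  induction e with
  | _ x y => exact ⟨(x, y), h he, rfl⟩

end SimpleGraph

open SimpleGraph

section Exchange

variable {V : Set Pt} {G : SimpleGraph Pt} {u v a b : Pt}

lemma edgeLen_mk (a b : Pt) : edgeLen s(a, b) = dist a b := rfl

lemma glength_deleteEdges_add (hG : G.edgeSet.Finite) {e : Sym2 Pt} (he : e ∈ G.edgeSet) :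
    glength (G.deleteEdges {e}) + edgeLen e = glength G := by
  rw [glength, glength, edgeSet_deleteEdges, add_comm, ← finsum_mem_singleton (f := edgeLen)]
  exact finsum_mem_add_sdiff (Set.singleton_subset_iff.mpr he) hG

lemma glength_sup_edge (hG : G.edgeSet.Finite) (hab : a ≠ b) (hnadj : ¬ G.Adj a b) :
    glength (G ⊔ edge a b) = glength G + dist a b := by
  rw [glength, glength, edgeSet_sup, edgeSet_edge_of_ne hab, Set.union_singleton,
    finsum_mem_insert _ (mt G.mem_edgeSet.mp hnadj) hG, add_comm, edgeLen_mk]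

lemma IsSpanningTreeOn.exchange (hG : IsSpanningTreeOn V G) (huv : G.Adj u v) (ha : a ∈ V)
    (hb : b ∈ V) (hsep : ¬ (G.deleteEdges {s(u, v)}).Reachable a b) :
    IsSpanningTreeOn V (G.deleteEdges {s(u, v)} ⊔ edge a b) := by
  set D := G.deleteEdges {s(u, v)}
  have hDH : D ≤ D ⊔ edge a b := le_sup_left
  have hne : a ≠ b := fun h => hsep (h ▸ .rfl)
  have hab : (D ⊔ edge a b).Reachable a b := Adj.reachable (by simp [edge_adj, hne])
  have huv' : (D ⊔ edge a b).Reachable u v := by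
    obtain ⟨p⟩ := hG.2.2 a ha b hb
    have hD : ∀ c d, s(c, d) ∈ p.bypass.edges → s(c, d) ≠ s(u, v) → D.Reachable c d :=
      fun c d hcd => (p.bypass.adj_of_mem_edges hcd).reachable_deleteEdges
    have hmem : s(u, v) ∈ p.bypass.edges := by
      by_contra h
      exact hsep (p.bypass.reachable_deleteEdges_of_notMem h)
    rcases p.bypass.reachable_ends_of_mem_edges p.bypass_isPath.edges_nodup hmem hD with
      ⟨hau, hvb⟩ | ⟨hav, hub⟩
    · exact (hau.mono hDH).symm.trans (hab.trans (hvb.mono hDH).symm)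
    · exact (hub.mono hDH).trans (hab.symm.trans (hav.mono hDH))
  refine ⟨fun x y hxy => ?_, (hG.2.1.anti (deleteEdges_le _)).sup_edge_of_not_reachable hsep,
    fun x hx y hy => ?_⟩
  · rcases hxy with hxy | hxy
    · exact hG.1 (deleteEdges_le _ hxy)
    · rcases ((edge_adj ..).mp hxy).1 with ⟨rfl, rfl⟩ | ⟨rfl, rfl⟩
      exacts [⟨ha, hb⟩, ⟨hb, ha⟩]
  · obtain ⟨p⟩ := hG.2.2 x hx y hy
    refine p.reachable_of_forall_mem_edges fun c d hcd => ?_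
    by_cases h : s(c, d) = s(u, v)
    · rcases Sym2.eq_iff.mp h with ⟨rfl, rfl⟩ | ⟨rfl, rfl⟩
      exacts [huv', huv'.symm]
    · exact ((p.adj_of_mem_edges hcd).reachable_deleteEdges h).mono hDH

/-- The cut property. -/
lemma IsMSTOn.dist_le_of_not_reachable (hV : V.Finite) (hG : IsMSTOn V G) (huv : G.Adj u v)
    (ha : a ∈ V) (hb : b ∈ V) (hsep : ¬ (G.deleteEdges {s(u, v)}).Reachable a b) :
    dist u v ≤ dist a b := by
  have hfin := edgeSet_finite_of_adj hV hG.1.1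
  have hmin := hG.2 _ (hG.1.exchange huv ha hb hsep)
  have hne : a ≠ b := fun h => hsep (h ▸ .rfl)
  rw [glength_sup_edge (hfin.subset (edgeSet_mono (deleteEdges_le _))) hne
    fun h => hsep h.reachable] at hmin
  have := glength_deleteEdges_add hfin (G.mem_edgeSet.mpr huv)
  rw [edgeLen_mk] at this
  linarith

/-- The cycle property. -/
lemma IsMSTOn.dist_le_of_mem_edges (hV : V.Finite) (hG : IsMSTOn V G) {p : G.Walk a b}
    (hp : p.IsPath) (huv : s(u, v) ∈ p.edges) (ha : a ∈ V) (hb : b ∈ V) :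
    dist u v ≤ dist a b :=
  hG.dist_le_of_not_reachable hV (p.adj_of_mem_edges huv) ha hb
    (hG.1.2.1.not_reachable_deleteEdges_of_mem_edges hp huv)

end Exchange

def DistinctDistancesOn (V : Set Pt) : Prop :=
  ∀ x ∈ V, ∀ y ∈ V, ∀ u ∈ V, ∀ v ∈ V, x ≠ y → u ≠ v → dist x y = dist u v → s(x, y) = s(u, v)

section Insertion

variable {P : Set Pt} {s : Pt} {T T' : SimpleGraph Pt}

lemma notMem_of_adj (hs : s ∉ P) (hT : IsSpanningTreeOn P T) {u v : Pt} (huv : T.Adj u v) :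
    s ∉ s(u, v) := by
  rw [Sym2.mem_iff]
  rintro (rfl | rfl)
  exacts [hs (hT.1 huv).1, hs (hT.1 huv).2]

lemma DistinctDistancesOn.edge_eq_of_dist_eq (hdist : DistinctDistancesOn (insert s P))
    (hT : IsSpanningTreeOn P T) (hT' : IsSpanningTreeOn (insert s P) T') {c d u v : Pt}
    (hcd : T.Adj c d) (huv : T'.Adj u v) (h : dist c d = dist u v) : s(c, d) = s(u, v) :=
  hdist c (.inr (hT.1 hcd).1) d (.inr (hT.1 hcd).2) u (hT'.1 huv).1 v (hT'.1 huv).2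
    hcd.ne huv.ne h

lemma adj_of_adj_insert (hP : P.Finite) (hdist : DistinctDistancesOn (insert s P))
    (hT : IsMSTOn P T) (hT' : IsMSTOn (insert s P) T') {u v : Pt} (huv : T'.Adj u v)
    (hu : u ≠ s) (hv : v ≠ s) : T.Adj u v := by
  have hu' := Set.mem_of_mem_insert_of_ne (hT'.1.1 huv).1 hu
  have hv' := Set.mem_of_mem_insert_of_ne (hT'.1.1 huv).2 hv
  obtain ⟨p⟩ := hT.1.2.2 u hu' v hv'
  obtain ⟨c, d, hcd, hsep⟩ : ∃ c d, s(c, d) ∈ p.bypass.edges ∧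
      ¬ (T'.deleteEdges {s(u, v)}).Reachable c d := by
    by_contra! h
    exact hT'.1.2.1.not_reachable_deleteEdges_of_adj huv (p.bypass.reachable_of_forall_mem_edges h)
  have hTcd := p.bypass.adj_of_mem_edges hcd
  have hle := hT'.dist_le_of_not_reachable (hP.insert s) huv (.inr (hT.1.1 hTcd).1)
    (.inr (hT.1.1 hTcd).2) hsep
  have hge := hT.dist_le_of_mem_edges hP p.bypass_isPath hcd hu' hv'
  rw [← mem_edgeSet, ← hdist.edge_eq_of_dist_eq hT.1 hT'.1 hTcd huv (le_antisymm hge hle)]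
  exact hTcd

lemma notMem_edgeSet_of_bottleneckEdge (hP : P.Finite) (hs : s ∉ P)
    (hdist : DistinctDistancesOn (insert s P)) (hT : IsMSTOn P T)
    (hT' : IsMSTOn (insert s P) T') {x y : Pt} {e : Sym2 Pt} (hx : T'.Adj s x)
    (hy : T'.Adj s y) (he : BottleneckEdge T x y e) : e ∉ T'.edgeSet := by
  induction e with | _ u v => ?_
  intro huv
  rw [mem_edgeSet] at huv
  set K := T'.deleteEdges {s(u, v)}
  have hsuv := notMem_of_adj hs hT.1 (T.mem_edgeSet.mp he.1)
  have hsz : ∀ z, T'.Adj s z → K.Reachable s z := fun z hz =>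
    hz.reachable_deleteEdges fun h : s(s, z) = s(u, v) => hsuv (h ▸ Sym2.mem_mk_left s z)
  have hxy := (hsz x hx).symm.trans (hsz y hy)
  obtain ⟨p⟩ := hT.1.2.2 x (Set.mem_of_mem_insert_of_ne (hT'.1.1 hx).2 hx.ne')
    y (Set.mem_of_mem_insert_of_ne (hT'.1.1 hy).2 hy.ne')
  obtain ⟨hmem, hmax⟩ := he.2 p.bypass p.bypass_isPath
  -- every other edge of the `T`-path is shorter than `s(u, v)`, so by the cut property in `T'`
  -- it does not cross the cut of `s(u, v)`
  have hK : ∀ c d, s(c, d) ∈ p.bypass.edges → s(c, d) ≠ s(u, v) → K.Reachable c d := by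
    intro c d hcd hne
    by_contra hsep
    have hTcd := p.bypass.adj_of_mem_edges hcd
    exact hne <| hdist.edge_eq_of_dist_eq hT.1 hT'.1 hTcd huv <| le_antisymm (hmax _ hcd) <|
      hT'.dist_le_of_not_reachable (hP.insert s) huv (.inr (hT.1.1 hTcd).1)
        (.inr (hT.1.1 hTcd).2) hsep
  have hbridge := hT'.1.2.1.not_reachable_deleteEdges_of_adj huv
  rcases p.bypass.reachable_ends_of_mem_edges p.bypass_isPath.edges_nodup hmem hK with
    ⟨hxu, hvy⟩ | ⟨hxv, huy⟩
  · exact hbridge (hxu.symm.trans (hxy.trans hvy.symm))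
  · exact hbridge (huy.trans (hxy.symm.trans hxv))

lemma reachable_deleteEdges_of_walk (hP : P.Finite) (hdist : DistinctDistancesOn (insert s P))
    (hT : IsMSTOn P T) (hT' : IsMSTOn (insert s P) T') {a b : Pt} (w : T'.Walk a b)
    (hsw : s ∉ w.support) {e : Sym2 Pt} (he : e ∉ w.edges) :
    (T.deleteEdges {e}).Reachable a b :=
  w.reachable_of_forall_mem_edges fun _ _ hcd =>
    (adj_of_adj_insert hP hdist hT hT' (w.adj_of_mem_edges hcd)
      (fun h => hsw (h ▸ w.fst_mem_support_of_mem_edges hcd))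
      (fun h => hsw (h ▸ w.snd_mem_support_of_mem_edges hcd))).reachable_deleteEdges
      fun h => he (h ▸ hcd)

lemma exists_adj_reachable_deleteEdges (hP : P.Finite) (hdist : DistinctDistancesOn (insert s P))
    (hT : IsMSTOn P T) (hT' : IsMSTOn (insert s P) T') {u : Pt} {r : T'.Walk s u}
    (hr : r.IsPath) (hu : u ≠ s) :
    ∃ x, T'.Adj s x ∧ ∀ e ∉ r.edges, (T.deleteEdges {e}).Reachable x u := by
  obtain ⟨x, hsx, r', hsr', hsub⟩ := hr.exists_adj_walk_notMem_support hu.symm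
  exact ⟨x, hsx, fun e he =>
    reachable_deleteEdges_of_walk hP hdist hT hT' r' hsr' fun h => he (hsub h)⟩

/-- An edge `s(u, v)` of `T` that is not kept in `T'` is the bottleneck edge for the two
neighbours of `s` through which the `T'`-path from `u` to `v` enters and leaves `s`. -/
lemma bottleneckEdge_of_adj_of_not_adj (hP : P.Finite) (hs : s ∉ P)
    (hdist : DistinctDistancesOn (insert s P)) (hT : IsMSTOn P T)
    (hT' : IsMSTOn (insert s P) T') {u v : Pt} (huv : T.Adj u v) (hnadj : ¬ T'.Adj u v) :
    ∃ x, T'.Adj s x ∧ ∃ y, T'.Adj s y ∧ x ≠ y ∧ BottleneckEdge T x y s(u, v) := by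
  have hu := (hT.1.1 huv).1
  have hv := (hT.1.1 huv).2
  have hbridge := hT.1.2.1.not_reachable_deleteEdges_of_adj huv
  obtain ⟨q⟩ := hT'.1.2.2 u (.inr hu) v (.inr hv)
  have hq := q.bypass_isPath
  set q := q.bypass
  have huvq : s(u, v) ∉ q.edges := fun h => hnadj (q.adj_of_mem_edges h)
  have hsq : s ∈ q.support := by
    by_contra h
    exact hbridge (reachable_deleteEdges_of_walk hP hdist hT hT' q h huvq)
  obtain ⟨x, hsx, hxu⟩ := exists_adj_reachable_deleteEdges hP hdist hT hT'
    (hq.takeUntil hsq).reverse fun h => hs (h ▸ hu)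
  obtain ⟨y, hsy, hyv⟩ := exists_adj_reachable_deleteEdges hP hdist hT hT'
    (hq.dropUntil hsq) fun h => hs (h ▸ hv)
  replace hxu : ∀ e ∉ q.edges, (T.deleteEdges {e}).Reachable x u := fun e he =>
    hxu e fun h => he (q.edges_takeUntil_subset_edges hsq (by simpa using h))
  replace hyv : ∀ e ∉ q.edges, (T.deleteEdges {e}).Reachable y v := fun e he =>
    hyv e fun h => he (q.edges_dropUntil_subset_edges hsq h)
  have hxy : x ≠ y := by
    rintro rfl
    exact hbridge ((hxu _ huvq).symm.trans (hyv _ huvq))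
  refine ⟨x, hsx, y, hsy, hxy, huv, fun p hp => ⟨?_, fun f hf => ?_⟩⟩
  · by_contra h
    exact hbridge ((hxu _ huvq).symm.trans ((p.reachable_deleteEdges_of_notMem h).trans
      (hyv _ huvq)))
  · induction f with | _ c d => ?_
    by_cases hfq : s(c, d) ∈ q.edges
    · exact hT'.dist_le_of_mem_edges (hP.insert s) hq hfq (.inr hu) (.inr hv)
    · exact hT.dist_le_of_not_reachable hP (p.adj_of_mem_edges hf) hu hv fun h =>
        hT.1.2.1.not_reachable_deleteEdges_of_mem_edges hp hf
          ((hxu _ hfq).trans (h.trans (hyv _ hfq).symm))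

lemma edgeSet_sdiff_eq_bottleneckEdges (hP : P.Finite) (hs : s ∉ P)
    (hdist : DistinctDistancesOn (insert s P)) (hT : IsMSTOn P T)
    (hT' : IsMSTOn (insert s P) T') :
    T.edgeSet \ T'.edgeSet = { e | ∃ x ∈ T'.neighborSet s, ∃ y ∈ T'.neighborSet s,
      x ≠ y ∧ BottleneckEdge T x y e } := by
  ext e
  refine ⟨fun ⟨he, he'⟩ => ?_, fun ⟨x, hx, y, hy, _, hxy⟩ => ⟨hxy.1, ?_⟩⟩
  · induction e with
    | _ u v => exact bottleneckEdge_of_adj_of_not_adj hP hs hdist hT hT' he he'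
  · exact notMem_edgeSet_of_bottleneckEdge hP hs hdist hT hT' hx hy hxy

lemma edgeSet_sdiff_eq_image (hP : P.Finite) (hs : s ∉ P)
    (hdist : DistinctDistancesOn (insert s P)) (hT : IsMSTOn P T)
    (hT' : IsMSTOn (insert s P) T') :
    T'.edgeSet \ T.edgeSet = (fun x => s(s, x)) '' T'.neighborSet s := by
  ext e
  refine ⟨fun ⟨he, he'⟩ => ?_, ?_⟩
  · induction e with | _ a b => ?_
    by_cases ha : a = s
    · exact ⟨b, ha ▸ he, by rw [ha]⟩
    by_cases hb : b = s
    · exact ⟨a, hb ▸ T'.adj_symm he, by rw [hb, Sym2.eq_swap]⟩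
    exact absurd (adj_of_adj_insert hP hdist hT hT' he ha hb) he'
  · rintro ⟨x, hx, rfl⟩
    exact ⟨hx, fun h => notMem_of_adj hs hT.1 h (Sym2.mem_mk_left s x)⟩

end Insertion

theorem stmt9_general (P : Finset Pt) (s : Pt) (hs : s ∉ P)
    (hdistinct : ∀ x ∈ insert s (P : Set Pt), ∀ y ∈ insert s (P : Set Pt),
      ∀ u ∈ insert s (P : Set Pt), ∀ v ∈ insert s (P : Set Pt),
      x ≠ y → u ≠ v → dist x y = dist u v → s(x, y) = s(u, v))
    (T T' : SimpleGraph Pt)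
    (hT : IsMSTOn ↑P T) (hT' : IsMSTOn (insert s ↑P) T')
    (B : Set (Sym2 Pt))
    (hB : B = { e | ∃ x ∈ T'.neighborSet s, ∃ y ∈ T'.neighborSet s,
      x ≠ y ∧ BottleneckEdge T x y e }) :
    glength T' =
      glength T + (∑ᶠ x ∈ T'.neighborSet s, dist s x) - ∑ᶠ e ∈ B, edgeLen e := by
  have hPfin := P.finite_toSet
  have hB' : B = T.edgeSet \ T'.edgeSet := by
    rw [hB, edgeSet_sdiff_eq_bottleneckEdges hPfin hs hdistinct hT hT']
  have hstar :
      ∑ᶠ e ∈ T'.edgeSet \ T.edgeSet, edgeLen e = ∑ᶠ x ∈ T'.neighborSet s, dist s x := by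
    rw [edgeSet_sdiff_eq_image hPfin hs hdistinct hT hT',
      finsum_mem_image fun _ _ _ _ => Sym2.congr_right.mp]
    rfl
  rw [hB', ← hstar, glength, glength,
    ← finsum_mem_inter_add_sdiff T.edgeSet (edgeSet_finite_of_adj (hPfin.insert s) hT'.1.1),
    ← finsum_mem_inter_add_sdiff T'.edgeSet (edgeSet_finite_of_adj hPfin hT.1.1),
    Set.inter_comm]
  ring

theorem stmt9 (P : Finset Pt) (hP : P.Nonempty) (s : Pt) (hs : s ∉ P)
    (hdistinct : ∀ x ∈ insert s (P : Set Pt), ∀ y ∈ insert s (P : Set Pt),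
      ∀ u ∈ insert s (P : Set Pt), ∀ v ∈ insert s (P : Set Pt),
      x ≠ y → u ≠ v → dist x y = dist u v → s(x, y) = s(u, v))
    (T T' : SimpleGraph Pt)
    (hT : IsMSTOn ↑P T) (hT' : IsMSTOn (insert s ↑P) T')
    (B : Set (Sym2 Pt))
    (hB : B = { e | ∃ x ∈ T'.neighborSet s, ∃ y ∈ T'.neighborSet s,
      x ≠ y ∧ BottleneckEdge T x y e }) :
    glength T' =
      glength T + (∑ᶠ x ∈ T'.neighborSet s, dist s x) - ∑ᶠ e ∈ B, edgeLen e :=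
  stmt9_general P s hs hdistinct T T' hT hT' B hB

end
end

section
/- Let P be a finite set of at least two points in the Euclidean plane ℝ², let s ∈ ℝ² \ P, and let T be a minimum spanning tree of P ∪ {s}. Define D = { dist(x, y) : {x, y} is an edge of T with x, y ∈ P } ∪ { dist(x, y) : x, y ∈ P, x ≠ y, and both x and y are neighbours of s in T }. Then D is nonempty and the minimum of D equals the minimum of dist(x, y) over all pairs of distinct points x, y ∈ P. -/
/-!
The cycle property of minimum spanning trees: if `ab` is an edge on the tree path from `x` to
`y`, then removing `ab` separates `x` from `y`, so adding `xy` instead gives another spanning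
tree, and minimality yields `|ab| ≤ |xy|`. Apply this to a closest pair `x, y` of `P`. If the
tree path from `x` to `y` has an edge with both ends in `P`, that edge has length exactly
`|xy|`; otherwise every edge of the path meets `s`, and since a path visits `s` at most once,
the path is `x – s – y`.
-/

open scoped BigOperators

noncomputable section

open SimpleGraph

lemma IsSpanningTreeOn.edgeSet_finite {V : Set Pt} {T : SimpleGraph Pt} (hV : V.Finite)
    (hT : IsSpanningTreeOn V T) : T.edgeSet.Finite := by
  refine ((hV.prod hV).image fun p => s(p.1, p.2)).subset fun e he => ?_
  induction e with
  | _ a b => exact ⟨(a, b), hT.1 he, rfl⟩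

lemma glength_deleteEdges {G : SimpleGraph Pt} (hG : G.edgeSet.Finite) {e : Sym2 Pt}
    (he : e ∈ G.edgeSet) : glength (G.deleteEdges {e}) = glength G - edgeLen e := by
  have hsplit : glength G = edgeLen e + ∑ᶠ e' ∈ G.edgeSet \ {e}, edgeLen e' := by
    rw [glength, ← finsum_mem_insert edgeLen (fun h : e ∈ G.edgeSet \ {e} => h.2 rfl) hG.sdiff,
      Set.insert_sdiff_singleton, Set.insert_eq_of_mem he]
  rw [hsplit, glength, edgeSet_deleteEdges]
  ring

lemma glength_sup_edge_s12 {G : SimpleGraph Pt} (hG : G.edgeSet.Finite) {x y : Pt} (hxy : x ≠ y)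
    (hadj : ¬G.Adj x y) : glength (G ⊔ edge x y) = glength G + dist x y := by
  rw [glength, glength, edgeSet_sup, edgeSet_edge_of_ne hxy, Set.union_singleton,
    finsum_mem_insert _ (by exact hadj) hG, add_comm]
  rfl

lemma reachable_of_forall_adj_reachable {V : Type*} {G H : SimpleGraph V}
    (h : ∀ ⦃u v : V⦄, G.Adj u v → H.Reachable u v) {u v : V} (huv : G.Reachable u v) :
    H.Reachable u v := by
  rw [reachable_iff_reflTransGen] at huv ⊢
  exact Relation.ReflTransGen.lift' id (fun a b hab => (reachable_iff_reflTransGen a b).mp (h hab))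
    u v huv

section Exchange

variable {V : Set Pt} {T : SimpleGraph Pt} {x y a b : Pt}

lemma IsSpanningTreeOn.not_reachable_deleteEdges (hT : IsSpanningTreeOn V T) (hab : T.Adj a b)
    (hxa : (T.deleteEdges {s(a, b)}).Reachable x a)
    (hby : (T.deleteEdges {s(a, b)}).Reachable b y) :
    ¬(T.deleteEdges {s(a, b)}).Reachable x y := fun hxy =>
  isBridge_iff.mp (isAcyclic_iff_forall_adj_isBridge.mp hT.2.1 hab)
    (hxa.symm.trans (hxy.trans hby.symm))

lemma IsSpanningTreeOn.deleteEdges_sup_edge (hT : IsSpanningTreeOn V T) (hx : x ∈ V)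
    (hy : y ∈ V) (hab : T.Adj a b) (hxa : (T.deleteEdges {s(a, b)}).Reachable x a)
    (hby : (T.deleteEdges {s(a, b)}).Reachable b y) :
    IsSpanningTreeOn V (T.deleteEdges {s(a, b)} ⊔ edge x y) := by
  have hnr := hT.not_reachable_deleteEdges hab hxa hby
  have hxy : x ≠ y := fun h => hnr (h ▸ Reachable.refl x)
  have hle : T.deleteEdges {s(a, b)} ≤ T.deleteEdges {s(a, b)} ⊔ edge x y := le_sup_left
  refine ⟨fun u v huv => ?_, ?_, fun u hu v hv => ?_⟩
  · rcases huv with huv | huv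
    · exact hT.1 huv.1
    · rcases (edge_adj _ _ _ _).mp huv with ⟨⟨rfl, rfl⟩ | ⟨rfl, rfl⟩, -⟩
      exacts [⟨hx, hy⟩, ⟨hy, hx⟩]
  · exact (hT.2.1.anti (deleteEdges_le _)).sup_edge_of_not_reachable hnr
  · refine reachable_of_forall_adj_reachable (fun u' v' huv' => ?_) (hT.2.2 u hu v hv)
    by_cases he : s(u', v') = s(a, b)
    · have hab' : (T.deleteEdges {s(a, b)} ⊔ edge x y).Reachable a b :=
        (hxa.symm.mono hle).trans <| (Adj.reachable (Or.inr ((edge_adj _ _ _ _).mpr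
          ⟨Or.inl ⟨rfl, rfl⟩, hxy⟩))).trans (hby.symm.mono hle)
      rcases Sym2.eq_iff.mp he with ⟨rfl, rfl⟩ | ⟨rfl, rfl⟩
      exacts [hab', hab'.symm]
    · exact (Adj.reachable (deleteEdges_adj.mpr ⟨huv', he⟩)).mono hle

lemma IsMSTOn.dist_le_of_reachable_deleteEdges (hV : V.Finite) (hT : IsMSTOn V T) (hx : x ∈ V)
    (hy : y ∈ V) (hab : T.Adj a b) (hxa : (T.deleteEdges {s(a, b)}).Reachable x a)
    (hby : (T.deleteEdges {s(a, b)}).Reachable b y) : dist a b ≤ dist x y := by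
  have hnr := hT.1.not_reachable_deleteEdges hab hxa hby
  have hxy : x ≠ y := fun h => hnr (h ▸ Reachable.refl x)
  have hfin := hT.1.edgeSet_finite hV
  have hexch := hT.2 _ (hT.1.deleteEdges_sup_edge hx hy hab hxa hby)
  rw [glength_sup_edge_s12 (hfin.subset (edgeSet_mono (deleteEdges_le _))) hxy
    (fun h => hnr h.reachable), glength_deleteEdges hfin hab] at hexch
  linarith [show edgeLen s(a, b) = dist a b from rfl]

end Exchange

lemma SimpleGraph.Walk.IsPath.reachable_deleteEdges_of_mem_edges {W : Type*} {G : SimpleGraph W}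
    {x y a b : W} {p : G.Walk x y} (hp : p.IsPath) (he : s(a, b) ∈ p.edges) :
    (G.deleteEdges {s(a, b)}).Reachable x a ∧ (G.deleteEdges {s(a, b)}).Reachable b y ∨
      (G.deleteEdges {s(a, b)}).Reachable x b ∧ (G.deleteEdges {s(a, b)}).Reachable a y := by
  induction p with
  | nil => simp at he
  | @cons u c y h q ih =>
    have hnodup := hp.isTrail.edges_nodup
    rw [Walk.edges_cons, List.nodup_cons] at hnodup
    rw [Walk.edges_cons, List.mem_cons] at he
    rcases he with he | he
    · have hq := (q.toDeleteEdge _ (he ▸ hnodup.1)).reachable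
      rcases Sym2.eq_iff.mp he.symm with ⟨rfl, rfl⟩ | ⟨rfl, rfl⟩
      exacts [Or.inl ⟨Reachable.refl _, hq⟩, Or.inr ⟨Reachable.refl _, hq⟩]
    · have huc : (G.deleteEdges {s(a, b)}).Reachable u c :=
        Adj.reachable <| deleteEdges_adj.mpr
          ⟨h, fun hc => hnodup.1 (Set.mem_singleton_iff.mp hc ▸ he)⟩
      rcases ih hp.of_cons he with ⟨h1, h2⟩ | ⟨h1, h2⟩
      exacts [Or.inl ⟨huc.trans h1, h2⟩, Or.inr ⟨huc.trans h1, h2⟩]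

lemma IsMSTOn.dist_le_of_mem_edges_s12 {V : Set Pt} {T : SimpleGraph Pt} (hV : V.Finite)
    (hT : IsMSTOn V T) {x y a b : Pt} (hx : x ∈ V) (hy : y ∈ V) {p : T.Walk x y}
    (hp : p.IsPath) (he : s(a, b) ∈ p.edges) : dist a b ≤ dist x y := by
  have hab := p.adj_of_mem_edges he
  rcases hp.reachable_deleteEdges_of_mem_edges he with ⟨hxa, hby⟩ | ⟨hxb, hay⟩
  · exact hT.dist_le_of_reachable_deleteEdges hV hx hy hab hxa hby
  · rw [Sym2.eq_swap] at hxb hay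
    rw [_root_.dist_comm]
    exact hT.dist_le_of_reachable_deleteEdges hV hx hy hab.symm hxb hay

lemma SimpleGraph.Walk.IsPath.exists_mem_edges_or_adj_adj {W : Type*} {G : SimpleGraph W}
    {A : Set W} {s : W} (hG : ∀ ⦃u v : W⦄, G.Adj u v → u ∈ insert s A ∧ v ∈ insert s A)
    {x y : W} (hx : x ∈ A) (hy : y ∈ A) (hxy : x ≠ y) {p : G.Walk x y} (hp : p.IsPath) :
    (∃ a ∈ A, ∃ b ∈ A, s(a, b) ∈ p.edges) ∨ G.Adj s x ∧ G.Adj s y := by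
  cases p with
  | nil => exact absurd rfl hxy
  | @cons _ c _ hxc q =>
    by_cases hc : c ∈ A
    · exact Or.inl ⟨x, hx, c, hc, by simp⟩
    obtain rfl : c = s := (hG hxc).2.resolve_right hc
    cases q with
    | nil => exact absurd hy hc
    | @cons _ d _ hcd r =>
      have hd : d ∈ A := (hG hcd).2.resolve_left hcd.ne'
      cases r with
      | nil => exact Or.inr ⟨hxc.symm, hcd⟩
      | @cons _ e _ hde r =>
        by_cases he : e ∈ A
        · exact Or.inl ⟨d, hd, e, he, by simp⟩
        obtain rfl : e = c := (hG hde).2.resolve_right he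
        have hnodup := hp.support_nodup
        simp only [Walk.support_cons, List.nodup_cons, List.mem_cons] at hnodup
        exact (hnodup.2.1 (Or.inr r.start_mem_support)).elim

lemma Finset.exists_dist_le_of_one_lt_card {α : Type*} [PseudoMetricSpace α] {P : Finset α}
    (hP : 1 < P.card) :
    ∃ x ∈ P, ∃ y ∈ P, x ≠ y ∧ ∀ u ∈ P, ∀ v ∈ P, u ≠ v → dist x y ≤ dist u v := by
  obtain ⟨u, hu, v, hv, huv⟩ := Finset.one_lt_card.mp hP
  obtain ⟨⟨x, y⟩, hxy, hmin⟩ := P.offDiag.exists_min_image (fun q => dist q.1 q.2)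
    ⟨(u, v), Finset.mem_offDiag.mpr ⟨hu, hv, huv⟩⟩
  obtain ⟨hx, hy, hne⟩ := Finset.mem_offDiag.mp hxy
  exact ⟨x, hx, y, hy, hne, fun u hu v hv huv =>
    hmin (u, v) (Finset.mem_offDiag.mpr ⟨hu, hv, huv⟩)⟩

theorem stmt12_general (P : Finset Pt) (hP : 2 ≤ P.card) (s : Pt)
    (T : SimpleGraph Pt) (hT : IsMSTOn (insert s ↑P) T)
    (D : Set ℝ)
    (hD : D = { d | ∃ x ∈ (P : Set Pt), ∃ y ∈ (P : Set Pt),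
        s(x, y) ∈ T.edgeSet ∧ d = dist x y } ∪
      { d | ∃ x ∈ (P : Set Pt), ∃ y ∈ (P : Set Pt),
        x ≠ y ∧ T.Adj s x ∧ T.Adj s y ∧ d = dist x y }) :
    D.Nonempty ∧ ∃ m : ℝ, IsLeast D m ∧
      IsLeast { d | ∃ x ∈ (P : Set Pt), ∃ y ∈ (P : Set Pt), x ≠ y ∧ d = dist x y } m := by
  obtain ⟨x, hx, y, hy, hxy, hmin⟩ := Finset.exists_dist_le_of_one_lt_card hP
  have hxV : x ∈ insert s (P : Set Pt) := Set.mem_insert_of_mem _ hx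
  have hyV : y ∈ insert s (P : Set Pt) := Set.mem_insert_of_mem _ hy
  obtain ⟨p, hp⟩ : ∃ p : T.Walk x y, p.IsPath :=
    have ⟨w⟩ := hT.1.2.2 x hxV y hyV; ⟨w.toPath, w.toPath.2⟩
  have hmem : dist x y ∈ D := by
    rw [hD]
    rcases hp.exists_mem_edges_or_adj_adj hT.1.1 hx hy hxy with ⟨a, ha, b, hb, hab⟩ | hsxy
    · have hab' := p.adj_of_mem_edges hab
      have hle := hT.dist_le_of_mem_edges_s12 (P.finite_toSet.insert s) hxV hyV hp hab
      exact Or.inl ⟨a, ha, b, hb, hab', (hle.antisymm (hmin a ha b hb hab'.ne)).symm⟩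
    · exact Or.inr ⟨x, hx, y, hy, hxy, hsxy.1, hsxy.2, rfl⟩
  have hlower : ∀ d ∈ D, dist x y ≤ d := by
    rw [hD]
    rintro d (⟨a, ha, b, hb, hab, rfl⟩ | ⟨a, ha, b, hb, hab, -, -, rfl⟩)
    exacts [hmin a ha b hb hab.ne, hmin a ha b hb hab]
  refine ⟨⟨_, hmem⟩, dist x y, ⟨hmem, hlower⟩, ⟨x, hx, y, hy, hxy, rfl⟩, ?_⟩
  rintro d ⟨a, ha, b, hb, hab, rfl⟩
  exact hmin a ha b hb hab

theorem stmt12 (P : Finset Pt) (hP : 2 ≤ P.card) (s : Pt) (hs : s ∉ P)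
    (T : SimpleGraph Pt) (hT : IsMSTOn (insert s ↑P) T)
    (D : Set ℝ)
    (hD : D = { d | ∃ x ∈ (P : Set Pt), ∃ y ∈ (P : Set Pt),
        s(x, y) ∈ T.edgeSet ∧ d = dist x y } ∪
      { d | ∃ x ∈ (P : Set Pt), ∃ y ∈ (P : Set Pt),
        x ≠ y ∧ T.Adj s x ∧ T.Adj s y ∧ d = dist x y }) :
    D.Nonempty ∧ ∃ m : ℝ, IsLeast D m ∧
      IsLeast { d | ∃ x ∈ (P : Set Pt), ∃ y ∈ (P : Set Pt), x ≠ y ∧ d = dist x y } m :=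
  stmt12_general P hP s T hT D hD

end
end
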